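/- Fix an integer L ≥ 1. For ℓ ≥ 0 define V_ℓ = ∑_{q₁,…,q_ℓ ≥ 1} c_{L+q₁}·c_{q₁+q₂}⋯c_{q_{ℓ−1}+q_ℓ}·c_{q_ℓ} · C(L+q₁−1,q₁)·C(q₁+q₂−1,q₂)⋯C(q_{ℓ−1}+q_ℓ−1,q_ℓ), where c_s = 2∑_{n≥2} 2^{−n} n^{−s} (and V₀ = c_L). Then V_ℓ = A_{ℓ+1} − A_ℓ, where A_ℓ = ∑_{b₁,…,b_ℓ ≥ 2} 2^{ℓ−(b₁+⋯+b_ℓ)}[[b₁,…,b_ℓ]]^L and A₀ = 0. -/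

import Mathlib

open scoped BigOperators

/-- Finite semi-regular continued fraction `[[b₁,…,b_m]] = 1/(b₁ - [[b₂,…,b_m]])`,
with the empty continued fraction equal to `0` (so `[[b]] = 1/b`). -/
noncomputable def srcf : List ℝ → ℝ
  | [] => 0
  | b :: t => 1 / (b - srcf t)

/-- `Aseq L ℓ = ∑_{b₁,…,b_ℓ ≥ 2} 2^{ℓ-(b₁+⋯+b_ℓ)} [[b₁,…,b_ℓ]]^L` (with `Aseq L 0 = 0`). -/
noncomputable def Aseq (L ℓ : ℕ) : ℝ :=
  ∑' b : Fin ℓ → {n : ℕ // 2 ≤ n},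
    (2 : ℝ) ^ ((ℓ : ℤ) - ∑ i, ((b i : ℕ) : ℤ)) *
      (srcf (List.ofFn fun i => ((b i : ℕ) : ℝ))) ^ L

/-- `c_s = 2·∑_{n≥2} 2^{−n} n^{−s}`. -/
noncomputable def cseq (s : ℕ) : ℝ := 2 * ∑' n : ℕ, 1 / (2 ^ (n + 2) * ((n : ℝ) + 2) ^ s)

/-- The exponent sequence `e 0 = L`, `e i = q_i` for `1 ≤ i ≤ ℓ` (and `0` beyond). -/
def eSeq (L : ℕ) {ℓ : ℕ} (q : Fin ℓ → {n : ℕ // 1 ≤ n}) (i : ℕ) : ℕ :=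
  if i = 0 then L else if h : i - 1 < ℓ then (q ⟨i - 1, h⟩ : ℕ) else 0

/-!
Everything is done in `ℝ≥0∞`, where sums may be rearranged freely. With the weights
`2^{1-b}` on `b ≥ 2` (they sum to `1`) we have `c_s = ∑_b 2^{1-b} b^{-s}` and
`A_ℓ(L) = ∑_b ∏ᵢ 2^{1-bᵢ} [[b]]^L`. Writing `[[b₁,…,b_{ℓ+1}]]^L = (b₁ - [[b₂,…,b_{ℓ+1}]])^{-L}` and
expanding by the negative binomial series `(b - x)^{-L} = ∑_q C(L+q-1,q) x^q b^{-L-q}` gives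
`A_{ℓ+1}(L) = c_L + ∑_{q ≥ 1} C(L+q-1,q) c_{L+q} A_ℓ(q)`, the `q = 0` term using `A_ℓ(0) = 1`.
Peeling off `q₁` gives the same recursion `V_{ℓ+1}(L) = ∑_{q ≥ 1} C(L+q-1,q) c_{L+q} V_ℓ(q)`
without the `c_L` term, and `V_0(L) = c_L`, so `V_ℓ(L) + A_ℓ(L) = A_{ℓ+1}(L)` follows by
induction on `ℓ`, simultaneously for all `L ≥ 1`. All quantities are at most `1`, so the identity
passes to `ℝ`.
-/

open scoped ENNReal

def natEquivSubtypeLE (k : ℕ) : ℕ ≃ {n : ℕ // k ≤ n} where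
  toFun n := ⟨n + k, Nat.le_add_left k n⟩
  invFun b := b - k
  left_inv n := Nat.add_sub_cancel n k
  right_inv b := Subtype.ext (Nat.sub_add_cancel b.2)

theorem ENNReal.tsum_pi_fin_succ {α : Type*} {n : ℕ} (f : (Fin (n + 1) → α) → ℝ≥0∞) :
    ∑' b, f b = ∑' (x : α) (t : Fin n → α), f (Fin.cons x t) := by
  rw [← (Fin.consEquiv fun _ => α).tsum_eq, ← ENNReal.tsum_prod]
  rfl

theorem ENNReal.tsum_pi_fin_prod_eq_pow {α : Type*} (n : ℕ) (f : α → ℝ≥0∞) :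
    ∑' b : Fin n → α, ∏ i, f (b i) = (∑' x, f x) ^ n := by
  induction n with
  | zero => simp
  | succ n ih =>
    simp only [ENNReal.tsum_pi_fin_succ, Fin.prod_univ_succ, Fin.cons_zero, Fin.cons_succ,
      ENNReal.tsum_mul_left, ih, ENNReal.tsum_mul_right, pow_succ']

theorem hasSum_choose_mul_pow_mul_inv_pow {L : ℕ} (hL : 1 ≤ L) {x b : ℝ} (hxb : |x| < b) :
    HasSum (fun q : ℕ => ((L + q - 1).choose q : ℝ) * x ^ q * b⁻¹ ^ (L + q)) ((b - x)⁻¹ ^ L) := by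
  obtain ⟨m, rfl⟩ : ∃ m, L = m + 1 := ⟨L - 1, by omega⟩
  have hb : 0 < b := (abs_nonneg x).trans_lt hxb
  have hr : ‖x / b‖ < 1 := by
    rwa [Real.norm_eq_abs, abs_div, abs_of_pos hb, div_lt_one hb]
  have H := (hasSum_choose_mul_geometric_of_norm_lt_one m hr).mul_left (b⁻¹ ^ (m + 1))
  have hterm : ∀ q : ℕ, b⁻¹ ^ (m + 1) * ((q + m).choose m * (x / b) ^ q)
      = ((m + 1 + q - 1).choose q : ℝ) * x ^ q * b⁻¹ ^ (m + 1 + q) := fun q => by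
    rw [show m + 1 + q - 1 = q + m by omega, Nat.choose_symm_add, div_pow, pow_add]
    ring
  have hsum : b⁻¹ ^ (m + 1) * (1 / (1 - x / b) ^ (m + 1)) = (b - x)⁻¹ ^ (m + 1) := by
    rw [one_sub_div hb.ne', div_pow, one_div_div, ← mul_div_assoc, ← mul_pow,
      inv_mul_cancel₀ hb.ne', one_pow, one_div, inv_pow]
  simpa only [hterm, hsum] using H

theorem srcf_mem_Ico {l : List ℝ} (hl : ∀ x ∈ l, 2 ≤ x) : srcf l ∈ Set.Ico 0 1 := by
  induction l with
  | nil => simp [srcf]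
  | cons b t ih =>
    obtain ⟨h0, h1⟩ := ih fun x hx => hl x (List.mem_cons_of_mem b hx)
    have hb : 2 ≤ b := hl b List.mem_cons_self
    have hpos : 0 < b - srcf t := by linarith
    rw [srcf, Set.mem_Ico, div_lt_one hpos]
    exact ⟨by positivity, by linarith⟩

theorem ENNReal.ofReal_one_div_sub_pow_eq_tsum {L : ℕ} (hL : 1 ≤ L) {x b : ℝ} (hx : 0 ≤ x)
    (hxb : x < b) :
    ENNReal.ofReal (1 / (b - x)) ^ L
      = ∑' q : ℕ, ((L + q - 1).choose q : ℝ≥0∞) * ENNReal.ofReal x ^ q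
          * (ENNReal.ofReal b)⁻¹ ^ (L + q) := by
  have hb : 0 < b := hx.trans_lt hxb
  have H := hasSum_choose_mul_pow_mul_inv_pow hL (x := x) (abs_of_nonneg hx ▸ hxb)
  rw [← ENNReal.ofReal_pow (by rw [one_div]; exact inv_nonneg.2 (by linarith)), one_div,
    ← H.tsum_eq, ENNReal.ofReal_tsum_of_nonneg (fun q => by positivity) H.summable]
  refine tsum_congr fun q => ?_
  rw [ENNReal.ofReal_mul (by positivity), ENNReal.ofReal_mul (by positivity),
    ENNReal.ofReal_natCast, ENNReal.ofReal_pow hx, ENNReal.ofReal_pow (by positivity),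
    ENNReal.ofReal_inv_of_pos hb]

noncomputable def geomWeight (b : ℕ) : ℝ≥0∞ := 2 * 2⁻¹ ^ b

theorem geomWeight_ne_top (b : ℕ) : geomWeight b ≠ ∞ := by
  unfold geomWeight
  finiteness

theorem tsum_geomWeight : ∑' b : {n : ℕ // 2 ≤ n}, geomWeight b = 1 := by
  rw [← (natEquivSubtypeLE 2).tsum_eq]
  simp only [natEquivSubtypeLE, Equiv.coe_fn_mk, geomWeight, pow_add, ENNReal.tsum_mul_left,
    ENNReal.tsum_mul_right, ENNReal.tsum_geometric, ENNReal.one_sub_inv_two, inv_inv, pow_two]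
  have h2 : (2 : ℝ≥0∞) * 2⁻¹ = 1 := ENNReal.mul_inv_cancel two_ne_zero ENNReal.ofNat_ne_top
  rw [← mul_assoc 2 2⁻¹, h2, one_mul, h2]

theorem tsum_prod_geomWeight (ℓ : ℕ) :
    ∑' b : Fin ℓ → {n : ℕ // 2 ≤ n}, ∏ i, geomWeight (b i) = 1 := by
  rw [ENNReal.tsum_pi_fin_prod_eq_pow ℓ (fun b : {n : ℕ // 2 ≤ n} => geomWeight b),
    tsum_geomWeight, one_pow]

noncomputable def cseqENN (s : ℕ) : ℝ≥0∞ :=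
  ∑' b : {n : ℕ // 2 ≤ n}, geomWeight b * ((b : ℕ) : ℝ≥0∞)⁻¹ ^ s

noncomputable def AseqENN (L ℓ : ℕ) : ℝ≥0∞ :=
  ∑' b : Fin ℓ → {n : ℕ // 2 ≤ n},
    (∏ i, geomWeight (b i)) * ENNReal.ofReal (srcf (List.ofFn fun i => ((b i : ℕ) : ℝ))) ^ L

noncomputable def VseqENN (L ℓ : ℕ) : ℝ≥0∞ :=
  ∑' q : Fin ℓ → {n : ℕ // 1 ≤ n},
    (∏ i ∈ Finset.range ℓ,
      cseqENN (eSeq L q i + eSeq L q (i + 1)) *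
        ((eSeq L q i + eSeq L q (i + 1) - 1).choose (eSeq L q (i + 1)) : ℝ≥0∞)) *
      cseqENN (eSeq L q ℓ)

theorem srcf_ofFn_mem_Ico {ℓ : ℕ} (b : Fin ℓ → {n : ℕ // 2 ≤ n}) :
    srcf (List.ofFn fun i => ((b i : ℕ) : ℝ)) ∈ Set.Ico 0 1 :=
  srcf_mem_Ico fun x hx => by
    obtain ⟨i, rfl⟩ := List.mem_ofFn.1 hx
    exact_mod_cast (b i).2

theorem cseqENN_le_one (s : ℕ) : cseqENN s ≤ 1 :=
  tsum_geomWeight ▸ ENNReal.tsum_le_tsum fun b =>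
    mul_le_of_le_one_right'
      (pow_le_one' (ENNReal.inv_le_one.2 (by exact_mod_cast b.2.trans' one_le_two)) s)

theorem cseqENN_ne_top (s : ℕ) : cseqENN s ≠ ∞ :=
  ne_top_of_le_ne_top ENNReal.one_ne_top (cseqENN_le_one s)

theorem AseqENN_le_one (L ℓ : ℕ) : AseqENN L ℓ ≤ 1 :=
  tsum_prod_geomWeight ℓ ▸ ENNReal.tsum_le_tsum fun b =>
    mul_le_of_le_one_right' (pow_le_one' (ENNReal.ofReal_le_one.2 (srcf_ofFn_mem_Ico b).2.le) L)

theorem AseqENN_ne_top (L ℓ : ℕ) : AseqENN L ℓ ≠ ∞ :=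
  ne_top_of_le_ne_top ENNReal.one_ne_top (AseqENN_le_one L ℓ)

theorem AseqENN_zero_left (ℓ : ℕ) : AseqENN 0 ℓ = 1 := by
  simpa [AseqENN] using tsum_prod_geomWeight ℓ

theorem AseqENN_zero_right {L : ℕ} (hL : 1 ≤ L) : AseqENN L 0 = 0 := by
  simp [AseqENN, srcf, zero_pow (Nat.one_le_iff_ne_zero.1 hL)]

theorem AseqENN_succ {L : ℕ} (hL : 1 ≤ L) (ℓ : ℕ) :
    AseqENN L (ℓ + 1)
      = ∑' q : ℕ, ((L + q - 1).choose q : ℝ≥0∞) * cseqENN (L + q) * AseqENN q ℓ := by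
  set S : (Fin ℓ → {n : ℕ // 2 ≤ n}) → ℝ := fun t => srcf (List.ofFn fun i => ((t i : ℕ) : ℝ))
  set F : ℕ → {n : ℕ // 2 ≤ n} → (Fin ℓ → {n : ℕ // 2 ≤ n}) → ℝ≥0∞ := fun q x t =>
    ((L + q - 1).choose q : ℝ≥0∞) * (geomWeight x * ((x : ℕ) : ℝ≥0∞)⁻¹ ^ (L + q))
      * ((∏ i, geomWeight (t i)) * ENNReal.ofReal (S t) ^ q)
  have expand : ∀ (x : {n : ℕ // 2 ≤ n}) t, geomWeight x * (∏ i, geomWeight (t i))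
      * ENNReal.ofReal (1 / ((x : ℕ) - S t)) ^ L = ∑' q, F q x t := fun x t => by
    obtain ⟨h0, h1⟩ := srcf_ofFn_mem_Ico t
    have hx : (2 : ℝ) ≤ (x : ℕ) := by exact_mod_cast x.2
    rw [ENNReal.ofReal_one_div_sub_pow_eq_tsum hL h0 (by linarith), ENNReal.ofReal_natCast,
      ← ENNReal.tsum_mul_left]
    exact tsum_congr fun q => by ring
  calc AseqENN L (ℓ + 1)
      = ∑' (x : {n : ℕ // 2 ≤ n}) (t : Fin ℓ → {n : ℕ // 2 ≤ n}),
          geomWeight x * (∏ i, geomWeight (t i)) * ENNReal.ofReal (1 / ((x : ℕ) - S t)) ^ L := by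
        simp [AseqENN, ENNReal.tsum_pi_fin_succ, Fin.prod_univ_succ, List.ofFn_succ, srcf, S]
    _ = ∑' x, ∑' t, ∑' q, F q x t := by simp only [expand]
    _ = ∑' q, ∑' x, ∑' t, F q x t :=
        (tsum_congr fun x => ENNReal.tsum_comm).trans ENNReal.tsum_comm
    _ = _ := by
        simp only [F, cseqENN, AseqENN, ENNReal.tsum_mul_left, ENNReal.tsum_mul_right, S]

theorem eSeq_zero {ℓ : ℕ} (L : ℕ) (q : Fin ℓ → {n : ℕ // 1 ≤ n}) : eSeq L q 0 = L := rfl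

theorem eSeq_cons {ℓ : ℕ} (L : ℕ) (q₀ : {n : ℕ // 1 ≤ n}) (q : Fin ℓ → {n : ℕ // 1 ≤ n})
    (i : ℕ) :
    eSeq L (Fin.cons q₀ q) (i + 1) = eSeq q₀ q i := by
  rcases i with _ | i
  · rfl
  · by_cases hi : i < ℓ
    · simp only [eSeq, Nat.add_sub_cancel, dif_pos (Nat.succ_lt_succ hi), dif_pos hi,
        if_neg (Nat.succ_ne_zero _)]
      exact congrArg Subtype.val (Fin.cons_succ (α := fun _ => {n : ℕ // 1 ≤ n}) q₀ q ⟨i, hi⟩)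
    · simp [eSeq, hi]

theorem VseqENN_zero_right (L : ℕ) : VseqENN L 0 = cseqENN L := by
  simp [VseqENN, eSeq_zero]

theorem VseqENN_succ (L ℓ : ℕ) :
    VseqENN L (ℓ + 1) = ∑' q : {n : ℕ // 1 ≤ n},
      ((L + q - 1).choose q : ℝ≥0∞) * cseqENN (L + q) * VseqENN q ℓ := by
  rw [VseqENN, ENNReal.tsum_pi_fin_succ]
  refine tsum_congr fun q₀ => ?_
  rw [VseqENN, ← ENNReal.tsum_mul_left]
  refine tsum_congr fun q => ?_
  simp only [Finset.prod_range_succ', eSeq_cons, eSeq_zero]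
  ring

theorem AseqENN_succ_eq_cseqENN_add {L : ℕ} (hL : 1 ≤ L) (ℓ : ℕ) :
    AseqENN L (ℓ + 1) = cseqENN L + ∑' q : {n : ℕ // 1 ≤ n},
      ((L + q - 1).choose q : ℝ≥0∞) * cseqENN (L + q) * AseqENN q ℓ := by
  rw [AseqENN_succ hL, ← (natEquivSubtypeLE 1).tsum_eq, tsum_eq_zero_add' ENNReal.summable]
  simp [natEquivSubtypeLE, AseqENN_zero_left]

theorem VseqENN_add_AseqENN {L : ℕ} (hL : 1 ≤ L) (ℓ : ℕ) :
    VseqENN L ℓ + AseqENN L ℓ = AseqENN L (ℓ + 1) := by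
  induction ℓ generalizing L with
  | zero =>
    simp [VseqENN_zero_right, AseqENN_zero_right, AseqENN_succ_eq_cseqENN_add, hL,
      AseqENN_zero_right (Subtype.prop _)]
  | succ ℓ ih =>
    rw [VseqENN_succ, AseqENN_succ_eq_cseqENN_add hL, AseqENN_succ_eq_cseqENN_add hL,
      add_left_comm, ← ENNReal.tsum_add]
    simp only [← mul_add, ih (Subtype.prop _)]

theorem toReal_cseqENN (s : ℕ) : (cseqENN s).toReal = cseq s := by
  rw [cseqENN, ← (natEquivSubtypeLE 2).tsum_eq, ENNReal.tsum_toReal_eq fun n =>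
    ENNReal.mul_ne_top (geomWeight_ne_top _) (by simp [natEquivSubtypeLE]), cseq, ← tsum_mul_left]
  refine tsum_congr fun n => ?_
  simp only [natEquivSubtypeLE, Equiv.coe_fn_mk, geomWeight, ENNReal.toReal_mul,
    ENNReal.toReal_pow, ENNReal.toReal_inv, ENNReal.toReal_natCast, ENNReal.toReal_ofNat]
  push_cast
  rw [one_div, mul_inv, inv_pow, inv_pow, mul_assoc]

theorem toReal_prod_geomWeight {ℓ : ℕ} (b : Fin ℓ → ℕ) :
    (∏ i, geomWeight (b i)).toReal = (2 : ℝ) ^ ((ℓ : ℤ) - ∑ i, (b i : ℤ)) := by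
  simp only [geomWeight, ENNReal.toReal_mul, ENNReal.toReal_pow,
    ENNReal.toReal_inv, ENNReal.toReal_ofNat, Finset.prod_mul_distrib, Finset.prod_const,
    Finset.card_univ, Fintype.card_fin, Finset.prod_pow_eq_pow_sum]
  rw [zpow_sub₀ two_ne_zero, zpow_natCast, ← Nat.cast_sum, zpow_natCast, inv_pow, div_eq_mul_inv]

theorem toReal_AseqENN (L ℓ : ℕ) : (AseqENN L ℓ).toReal = Aseq L ℓ := by
  rw [AseqENN, ENNReal.tsum_toReal_eq fun b =>
    ENNReal.mul_ne_top (ENNReal.prod_ne_top fun i _ => geomWeight_ne_top _) (by finiteness)]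
  refine tsum_congr fun b => ?_
  rw [ENNReal.toReal_mul, toReal_prod_geomWeight, ENNReal.toReal_pow,
    ENNReal.toReal_ofReal (srcf_ofFn_mem_Ico b).1]

theorem toReal_VseqENN (L ℓ : ℕ) :
    (VseqENN L ℓ).toReal = ∑' q : Fin ℓ → {n : ℕ // 1 ≤ n},
      (∏ i ∈ Finset.range ℓ,
        cseq (eSeq L q i + eSeq L q (i + 1)) *
          ((eSeq L q i + eSeq L q (i + 1) - 1).choose (eSeq L q (i + 1)) : ℝ)) *
        cseq (eSeq L q ℓ) := by
  rw [VseqENN, ENNReal.tsum_toReal_eq fun q =>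
    ENNReal.mul_ne_top (ENNReal.prod_ne_top fun i _ =>
      ENNReal.mul_ne_top (cseqENN_ne_top _) (ENNReal.natCast_ne_top _)) (cseqENN_ne_top _)]
  simp only [ENNReal.toReal_mul, ENNReal.toReal_prod, ENNReal.toReal_natCast, toReal_cseqENN]

/-- `V_ℓ = ∑_{q₁,…,q_ℓ ≥ 1} c_{L+q₁} c_{q₁+q₂} ⋯ c_{q_{ℓ−1}+q_ℓ} c_{q_ℓ} ·
C(L+q₁−1,q₁) ⋯ C(q_{ℓ−1}+q_ℓ−1,q_ℓ) = A_{ℓ+1} − A_ℓ`. -/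
theorem V_eq_A_diff (L : ℕ) (hL : 1 ≤ L) (ℓ : ℕ) :
    ∑' q : Fin ℓ → {n : ℕ // 1 ≤ n},
      (∏ i ∈ Finset.range ℓ,
        cseq (eSeq L q i + eSeq L q (i + 1)) *
          ((eSeq L q i + eSeq L q (i + 1) - 1).choose (eSeq L q (i + 1)) : ℝ)) *
        cseq (eSeq L q ℓ)
      = Aseq L (ℓ + 1) - Aseq L ℓ := by
  have hsum := VseqENN_add_AseqENN hL ℓ
  rw [← toReal_VseqENN, ENNReal.eq_sub_of_add_eq (AseqENN_ne_top L ℓ) hsum,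
    ENNReal.toReal_sub_of_le (hsum ▸ le_add_self) (AseqENN_ne_top L _), toReal_AseqENN,
    toReal_AseqENN]
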